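/- Let X ∈ ℝ^{n×p} satisfy the (2, δ)-Restricted Isometry Property. Then for all vectors u, v ∈ ℝ^p (not necessarily sparse), ‖(n⁻¹XᵀX u) ∘ v − u ∘ v‖_∞ ≤ δ·‖u‖₁·‖v‖_∞. -/
import Mathlib


open MeasureTheory ProbabilityTheory Matrix Filter Topology

noncomputable section

/-- Hadamard (entrywise) product of two vectors. -/
def had {p : ℕ} (u v : Fin p → ℝ) : Fin p → ℝ := fun j => u j * v j

/-- Euclidean norm of a vector. -/
def nrm2 {p : ℕ} (v : Fin p → ℝ) : ℝ := Real.sqrt (∑ j, (v j) ^ 2)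

/-- ℓ1 norm of a vector. -/
def nrm1 {p : ℕ} (v : Fin p → ℝ) : ℝ := ∑ j, |v j|

/-- Sup norm of a vector. -/
def nrmInf {p : ℕ} (v : Fin p → ℝ) : ℝ := ⨆ j, |v j|

/-- A vector is `s`-sparse if it has at most `s` nonzero entries. -/
def Sparse {p : ℕ} (s : ℕ) (v : Fin p → ℝ) : Prop := {j | v j ≠ 0}.ncard ≤ s

/-- The `(s, δ)`-Restricted Isometry Property:
`(1−δ)‖u‖² ≤ n⁻¹‖Xu‖² ≤ (1+δ)‖u‖²` for all `s`-sparse `u`. -/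
def RIP {n p : ℕ} (X : Matrix (Fin n) (Fin p) ℝ) (s : ℕ) (δ : ℝ) : Prop :=
  ∀ u : Fin p → ℝ, Sparse s u →
    (1 - δ) * nrm2 u ^ 2 ≤ (n : ℝ)⁻¹ * nrm2 (X.mulVec u) ^ 2 ∧
      (n : ℝ)⁻¹ * nrm2 (X.mulVec u) ^ 2 ≤ (1 + δ) * nrm2 u ^ 2

lemma nrm2_sq {p : ℕ} (w : Fin p → ℝ) : nrm2 w ^ 2 = ∑ j, w j ^ 2 := by
  unfold nrm2
  rw [Real.sq_sqrt]
  positivity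

/-- pair vectors are 2-sparse -/
lemma sparse_pair {p : ℕ} (j k : Fin p) (a b : ℝ) :
    Sparse 2 (fun m => (if m = j then a else 0) + (if m = k then b else 0)) := by
  unfold Sparse
  refine le_trans (Set.ncard_le_ncard ?_ ((Set.finite_singleton k).insert j)) ?_
  · intro m hm
    simp only [Set.mem_setOf_eq] at hm
    by_contra h
    simp only [Set.mem_insert_iff, Set.mem_singleton_iff, not_or] at h
    exact hm (by rw [if_neg h.1, if_neg h.2, add_zero])
  · exact le_trans (Set.ncard_insert_le _ _) (by simp)

lemma mulVec_pair {n p : ℕ} (X : Matrix (Fin n) (Fin p) ℝ) (j k : Fin p) (a b : ℝ) (i : Fin n) :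
    X.mulVec (fun m => (if m = j then a else 0) + (if m = k then b else 0)) i
      = X i j * a + X i k * b := by
  unfold Matrix.mulVec dotProduct
  simp [mul_add, mul_ite, mul_zero, Finset.sum_add_distrib, Finset.sum_ite_eq']

/-- The key Gram estimate. -/
lemma gram_bound {n p : ℕ} (X : Matrix (Fin n) (Fin p) ℝ) (δ : ℝ)
    (hRIP : RIP X 2 δ) (j k : Fin p) :
    |(n : ℝ)⁻¹ * (∑ i, X i j * X i k) - (if j = k then 1 else 0)| ≤ δ := by
  by_cases hjk : j = k
  · -- diagonal case: use e_j
    have h := hRIP (fun m => (if m = j then (1:ℝ) else 0) + (if m = j then 0 else 0))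
      (sparse_pair j j 1 0)
    have h1 : nrm2 (fun m => (if m = j then (1:ℝ) else 0) + (if m = j then 0 else 0)) ^ 2 = 1 := by
      rw [nrm2_sq]
      simp [Finset.sum_ite_eq']
    have h2 : nrm2 (X.mulVec (fun m => (if m = j then (1:ℝ) else 0) + (if m = j then 0 else 0))) ^ 2
        = ∑ i, X i j * X i j := by
      rw [nrm2_sq]
      congr 1; funext i
      rw [mulVec_pair]; ring
    rw [h1, h2] at h
    rw [if_pos hjk, ← hjk, abs_le]
    constructor <;> linarith [h.1, h.2]
  · -- off-diagonal: parallelogram with e_j ± e_k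
    have hplus := hRIP (fun m => (if m = j then (1:ℝ) else 0) + (if m = k then 1 else 0))
      (sparse_pair j k 1 1)
    have hminus := hRIP (fun m => (if m = j then (1:ℝ) else 0) + (if m = k then (-1) else 0))
      (sparse_pair j k 1 (-1))
    have keysq : ∀ c : ℝ,
        nrm2 (fun m => (if m = j then (1:ℝ) else 0) + (if m = k then c else 0)) ^ 2 = 1 + c ^ 2 := by
      intro c
      rw [nrm2_sq]
      have : ∀ m, ((if m = j then (1:ℝ) else 0) + (if m = k then c else 0)) ^ 2
          = (if m = j then (1:ℝ) else 0) + (if m = k then c ^ 2 else 0) := by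
        intro m
        by_cases h1 : m = j <;> by_cases h2 : m = k
        · exact absurd (h1 ▸ h2) hjk
        all_goals simp [h1, h2, hjk, Ne.symm hjk]
      rw [Finset.sum_congr rfl (fun m _ => this m)]
      simp [Finset.sum_add_distrib, Finset.sum_ite_eq']
    have keyX : ∀ c : ℝ,
        nrm2 (X.mulVec (fun m => (if m = j then (1:ℝ) else 0) + (if m = k then c else 0))) ^ 2
          = (∑ i, X i j * X i j) + c ^ 2 * (∑ i, X i k * X i k)
            + 2 * c * (∑ i, X i j * X i k) := by
      intro c
      rw [nrm2_sq]
      rw [Finset.mul_sum, Finset.mul_sum, ← Finset.sum_add_distrib, ← Finset.sum_add_distrib]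
      congr 1; funext i
      rw [mulVec_pair]; ring
    have hp1 := hplus.1; have hp2 := hplus.2
    have hm1 := hminus.1; have hm2 := hminus.2
    rw [keysq, keyX] at hp1 hp2 hm1 hm2
    have e1 : ((1:ℝ) + 1 ^ 2) = 2 := by norm_num
    have e2 : ((1:ℝ) + (-1) ^ 2) = 2 := by norm_num
    rw [e1] at hp1 hp2; rw [e2] at hm1 hm2
    rw [if_neg hjk, sub_zero, abs_le]
    constructor <;> nlinarith [hp1, hp2, hm1, hm2]

/-- Under the `(2, δ)`-RIP, for all vectors `u, v`,
`‖(n⁻¹XᵀXu)∘v − u∘v‖_∞ ≤ δ‖u‖₁‖v‖_∞`. -/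
theorem stmt11 (n p : ℕ) (X : Matrix (Fin n) (Fin p) ℝ) (δ : ℝ)
    (hRIP : RIP X 2 δ) (u v : Fin p → ℝ) :
    nrmInf (had ((n : ℝ)⁻¹ • Xᵀ.mulVec (X.mulVec u)) v - had u v) ≤ δ * nrm1 u * nrmInf v := by
  rcases Nat.eq_zero_or_pos p with hp | hp
  · subst hp
    have : ∀ w : Fin 0 → ℝ, nrmInf w = 0 := by
      intro w; unfold nrmInf; exact Real.iSup_of_isEmpty _
    rw [this, this]
    simp [nrm1]
  · -- p > 0
    obtain ⟨j0⟩ : Nonempty (Fin p) := ⟨⟨0, hp⟩⟩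
    -- δ ≥ 0
    have hδ : 0 ≤ δ := by
      have := gram_bound X δ hRIP j0 j0
      rw [if_pos rfl] at this
      have := abs_nonneg ((n : ℝ)⁻¹ * (∑ i, X i j0 * X i j0) - 1)
      linarith [gram_bound X δ hRIP j0 j0,
        neg_abs_le ((n : ℝ)⁻¹ * (∑ i, X i j0 * X i j0) - 1)]
    have hvInf : ∀ j, |v j| ≤ nrmInf v := by
      intro j
      unfold nrmInf
      exact le_ciSup (f := fun j => |v j|) (Set.Finite.bddAbove (Set.finite_range _)) j
    have hvInf0 : 0 ≤ nrmInf v := le_trans (abs_nonneg _) (hvInf j0)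
    have hnrm1 : 0 ≤ nrm1 u := Finset.sum_nonneg fun _ _ => abs_nonneg _
    unfold nrmInf
    apply Real.iSup_le _ (by positivity)
    intro j
    have hentry : ((n : ℝ)⁻¹ • Xᵀ.mulVec (X.mulVec u)) j - u j
        = ∑ k, ((n : ℝ)⁻¹ * (∑ i, X i j * X i k) - (if j = k then 1 else 0)) * u k := by
      have hXtX : Xᵀ.mulVec (X.mulVec u) j = ∑ k, (∑ i, X i j * X i k) * u k := by
        simp only [Matrix.mulVec, dotProduct, Matrix.transpose_apply,
          Finset.sum_mul, Finset.mul_sum]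
        rw [Finset.sum_comm]
        refine Finset.sum_congr rfl fun k _ => Finset.sum_congr rfl fun i _ => by ring
      have huj : u j = ∑ k, (if j = k then (1:ℝ) else 0) * u k := by
        simp [ite_mul, Finset.sum_ite_eq]
      simp only [Pi.smul_apply, smul_eq_mul]
      rw [hXtX, huj, Finset.mul_sum, ← Finset.sum_sub_distrib]
      congr 1; funext k
      ring
    have hbound : |((n : ℝ)⁻¹ • Xᵀ.mulVec (X.mulVec u)) j - u j| ≤ δ * nrm1 u := by
      rw [hentry]
      calc |∑ k, ((n : ℝ)⁻¹ * (∑ i, X i j * X i k) - (if j = k then 1 else 0)) * u k|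
          ≤ ∑ k, |((n : ℝ)⁻¹ * (∑ i, X i j * X i k) - (if j = k then 1 else 0)) * u k| :=
            Finset.abs_sum_le_sum_abs _ _
        _ ≤ ∑ k, δ * |u k| := by
            apply Finset.sum_le_sum
            intro k _
            rw [abs_mul]
            exact mul_le_mul_of_nonneg_right (gram_bound X δ hRIP j k) (abs_nonneg _)
        _ = δ * nrm1 u := by rw [nrm1, Finset.mul_sum]
    have : (had ((n : ℝ)⁻¹ • Xᵀ.mulVec (X.mulVec u)) v - had u v) j
        = (((n : ℝ)⁻¹ • Xᵀ.mulVec (X.mulVec u)) j - u j) * v j := by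
      simp [had]; ring
    rw [this, abs_mul]
    calc |((n : ℝ)⁻¹ • Xᵀ.mulVec (X.mulVec u)) j - u j| * |v j|
        ≤ (δ * nrm1 u) * nrmInf v :=
          mul_le_mul hbound (hvInf j) (abs_nonneg _) (by positivity)
      _ = δ * nrm1 u * nrmInf v := by ring
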